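/- For every shape parameter λ < 0 and every x > 0, the Mills ratio of the skew normal distribution satisfies the lower bound (1 - F_λ(x)) / f_λ(x) > x^{-1} (1 + x^{-2})^{-1} · (1 - (λ²/(1+λ²)) · (1 + 1/(λ² x²))). -/

import Mathlib

/-!
Put g(t) = (t² - 1) / ((1 + λ²)(t³ + t)), the left-hand side in polynomial form. The gap
D(t) = 1 - F_λ(t) - g(t) f_λ(t) tends to 0 as t → ∞, so it suffices that D strictly decreases
on [x, ∞). Since f_λ'(t) = -t f_λ(t) + 2λ φ(t) φ(λt), we have
-D' = f_λ (1 + g' - t g) + 2λ g φ(t) φ(λt). For λ < 0, Gordon's inequality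
Φ(λt) > -λt φ(λt) / (1 + λ²t²) bounds f_λ = 2φΦ(λt) from below, and what is left is a polynomial
inequality in t and λ. Gordon's inequality is proved by the same monotonicity argument.
-/

open Real MeasureTheory Filter Topology

/-- Standard normal density. -/
noncomputable def stdPhi (x : ℝ) : ℝ := (Real.sqrt (2 * Real.pi))⁻¹ * Real.exp (-(x ^ 2) / 2)

/-- Standard normal cdf. -/
noncomputable def stdCdf (x : ℝ) : ℝ := ∫ t in Set.Iic x, stdPhi t

/-- Skew normal density with shape parameter l. -/
noncomputable def snPdf (l x : ℝ) : ℝ := 2 * stdPhi x * stdCdf (l * x)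

/-- Skew normal cdf with shape parameter l. -/
noncomputable def snCdf (l x : ℝ) : ℝ := ∫ t in Set.Iic x, snPdf l t

/-- Gumbel extreme value distribution function. -/
noncomputable def gumbel (x : ℝ) : ℝ := Real.exp (-Real.exp (-x))

open Set ProbabilityTheory

theorem lt_of_hasDerivAt_neg_of_tendsto {f f' : ℝ → ℝ} {a L : ℝ}
    (hf : ∀ x ∈ Ici a, HasDerivAt f (f' x) x) (hf' : ∀ x ∈ Ici a, f' x < 0)
    (hlim : Tendsto f atTop (𝓝 L)) : L < f a := by
  have hanti : StrictAntiOn f (Ici a) := by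
    refine strictAntiOn_of_deriv_neg (convex_Ici a)
      (fun x hx => (hf x hx).continuousAt.continuousWithinAt) fun x hx => ?_
    rw [interior_Ici] at hx
    rw [(hf x (mem_Ici_of_Ioi hx)).deriv]
    exact hf' x (mem_Ici_of_Ioi hx)
  have h_le : L ≤ f (a + 1) := by
    refine le_of_tendsto hlim ?_
    filter_upwards [eventually_ge_atTop (a + 1)] with y hy
    exact hanti.antitoneOn (by simp) (by simp only [mem_Ici]; linarith) hy
  exact h_le.trans_lt (hanti (mem_Ici.2 le_rfl) (by simp) (by linarith))

section IntegralIic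

variable {f : ℝ → ℝ}

theorem hasDerivAt_integral_Iic (hi : Integrable f) {x : ℝ} (hf : ContinuousAt f x) :
    HasDerivAt (fun y => ∫ t in Iic y, f t) (f x) x := by
  have h_split : ∀ y, ∫ t in Iic y, f t = (∫ t in Iic 0, f t) + ∫ t in (0 : ℝ)..y, f t :=
    fun y => by
      rw [← intervalIntegral.integral_Iic_sub_Iic hi.integrableOn hi.integrableOn]
      ring
  exact ((intervalIntegral.integral_hasDerivAt_right hi.intervalIntegrable
    hi.aestronglyMeasurable.stronglyMeasurableAtFilter hf).const_add _).congr_of_eventuallyEq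
    (Eventually.of_forall h_split)

theorem tendsto_integral_Iic_atTop (hi : Integrable f) :
    Tendsto (fun y => ∫ t in Iic y, f t) atTop (𝓝 (∫ t, f t)) :=
  (aecover_Iic tendsto_id).integral_tendsto_of_countably_generated hi

end IntegralIic

theorem stdPhi_eq_gaussianPDFReal : stdPhi = gaussianPDFReal 0 1 := by
  ext x
  rw [stdPhi, gaussianPDFReal, NNReal.coe_one, mul_one, sub_zero, mul_one]

theorem stdPhi_pos (x : ℝ) : 0 < stdPhi x := by
  rw [stdPhi_eq_gaussianPDFReal]
  exact gaussianPDFReal_pos _ _ _ one_ne_zero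

theorem stdPhi_neg (x : ℝ) : stdPhi (-x) = stdPhi x := by simp [stdPhi]

theorem integrable_stdPhi : Integrable stdPhi := by
  rw [stdPhi_eq_gaussianPDFReal]
  exact integrable_gaussianPDFReal _ _

theorem integral_stdPhi : ∫ x, stdPhi x = 1 := by
  rw [stdPhi_eq_gaussianPDFReal]
  exact integral_gaussianPDFReal_eq_one _ one_ne_zero

theorem hasDerivAt_stdPhi (x : ℝ) : HasDerivAt stdPhi (-x * stdPhi x) x := by
  have h_exponent : HasDerivAt (fun y : ℝ => -(y ^ 2) / 2) (-x) x :=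
    ((hasDerivAt_pow 2 x).neg.div_const 2).congr_deriv (by ring)
  exact (h_exponent.exp.const_mul (√(2 * π))⁻¹).congr_deriv (by rw [stdPhi]; ring)

theorem continuous_stdPhi : Continuous stdPhi :=
  continuous_iff_continuousAt.2 fun x => (hasDerivAt_stdPhi x).continuousAt

theorem tendsto_stdPhi_atTop : Tendsto stdPhi atTop (𝓝 0) := by
  have h : Tendsto (fun x : ℝ => -(x ^ 2) / 2) atTop atBot :=
    (tendsto_neg_atTop_atBot.comp (tendsto_pow_atTop two_ne_zero)).atBot_div_const two_pos
  have h_lim := (tendsto_exp_atBot.comp h).const_mul (√(2 * π))⁻¹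
  rwa [mul_zero] at h_lim

theorem hasDerivAt_stdCdf (x : ℝ) : HasDerivAt stdCdf (stdPhi x) x :=
  hasDerivAt_integral_Iic integrable_stdPhi continuous_stdPhi.continuousAt

theorem continuous_stdCdf : Continuous stdCdf :=
  continuous_iff_continuousAt.2 fun x => (hasDerivAt_stdCdf x).continuousAt

theorem stdCdf_pos (x : ℝ) : 0 < stdCdf x := by
  rw [stdCdf, setIntegral_pos_iff_support_of_nonneg_ae
    (Eventually.of_forall fun t => (stdPhi_pos t).le) integrable_stdPhi.integrableOn,
    Function.support_eq_univ fun t => (stdPhi_pos t).ne', univ_inter, volume_Iic]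
  exact ENNReal.zero_lt_top

theorem stdCdf_le_one (x : ℝ) : stdCdf x ≤ 1 := by
  rw [stdCdf, ← integral_stdPhi]
  exact setIntegral_le_integral integrable_stdPhi
    (Eventually.of_forall fun t => (stdPhi_pos t).le)

theorem stdCdf_add_stdCdf_neg (x : ℝ) : stdCdf x + stdCdf (-x) = 1 := by
  have h_neg : stdCdf (-x) = ∫ t in Ioi x, stdPhi t := by
    rw [stdCdf, ← integral_comp_neg_Ioi]
    simp_rw [stdPhi_neg]
  rw [stdCdf, h_neg, ← integral_stdPhi]
  exact intervalIntegral.integral_Iic_add_Ioi integrable_stdPhi.integrableOn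
    integrable_stdPhi.integrableOn

theorem tendsto_stdCdf_atTop : Tendsto stdCdf atTop (𝓝 1) := by
  have h := tendsto_integral_Iic_atTop integrable_stdPhi
  rwa [integral_stdPhi] at h

theorem tendsto_stdCdf_neg_atTop : Tendsto (fun t => stdCdf (-t)) atTop (𝓝 0) := by
  have h := tendsto_stdCdf_atTop.const_sub 1
  rw [sub_self] at h
  exact h.congr fun t => by linarith [stdCdf_add_stdCdf_neg t]

/-- Gordon's inequality. -/
theorem mul_stdPhi_div_lt_stdCdf_neg (y : ℝ) : y * stdPhi y / (1 + y ^ 2) < stdCdf (-y) := by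
  have h_deriv : ∀ t : ℝ, HasDerivAt (fun t => stdCdf (-t) - t * stdPhi t / (1 + t ^ 2))
      (-(2 * stdPhi t / (1 + t ^ 2) ^ 2)) t := fun t => by
    have h_tail : HasDerivAt (fun t => stdCdf (-t)) (-stdPhi t) t :=
      ((hasDerivAt_stdCdf (-t)).comp t (hasDerivAt_neg t)).congr_deriv
        (by rw [stdPhi_neg, mul_neg_one])
    have h_ratio := ((hasDerivAt_id t).mul (hasDerivAt_stdPhi t)).div
      ((hasDerivAt_pow 2 t).const_add 1) (by positivity : (1 + t ^ 2) ≠ 0)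
    refine (h_tail.sub h_ratio).congr_deriv ?_
    simp only [id, Pi.mul_apply]
    field_simp
    ring
  have h_ratio_lim : Tendsto (fun t : ℝ => t * stdPhi t / (1 + t ^ 2)) atTop (𝓝 0) := by
    refine squeeze_zero' ?_ ?_ tendsto_stdPhi_atTop
    · filter_upwards [eventually_ge_atTop 0] with t ht
      have := stdPhi_pos t
      positivity
    · filter_upwards [eventually_ge_atTop 0] with t ht
      rw [div_le_iff₀ (by positivity)]
      nlinarith [stdPhi_pos t, sq_nonneg (t - 1)]
  have h_lim := tendsto_stdCdf_neg_atTop.sub h_ratio_lim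
  rw [sub_zero] at h_lim
  have h := lt_of_hasDerivAt_neg_of_tendsto (a := y) (fun t _ => h_deriv t)
    (fun t _ => by have := stdPhi_pos t; simp only [neg_lt_zero]; positivity) h_lim
  linarith

theorem snPdf_pos (l x : ℝ) : 0 < snPdf l x := by
  have := stdPhi_pos x
  have := stdCdf_pos (l * x)
  rw [snPdf]
  positivity

theorem snPdf_le_two_mul_stdPhi (l x : ℝ) : snPdf l x ≤ 2 * stdPhi x := by
  rw [snPdf]
  have := stdPhi_pos x
  nlinarith [stdCdf_le_one (l * x)]

theorem continuous_snPdf (l : ℝ) : Continuous (snPdf l) := by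
  unfold snPdf
  have := continuous_stdPhi
  have := continuous_stdCdf
  fun_prop

theorem integrable_snPdf (l : ℝ) : Integrable (snPdf l) := by
  refine (integrable_stdPhi.const_mul 2).mono (continuous_snPdf l).aestronglyMeasurable
    (Eventually.of_forall fun x => ?_)
  rw [norm_of_nonneg (snPdf_pos l x).le, norm_of_nonneg (by linarith [stdPhi_pos x])]
  exact snPdf_le_two_mul_stdPhi l x

theorem snPdf_add_snPdf_neg (l x : ℝ) : snPdf l x + snPdf l (-x) = 2 * stdPhi x := by
  have h := stdCdf_add_stdCdf_neg (l * x)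
  rw [snPdf, snPdf, stdPhi_neg, mul_neg]
  linear_combination 2 * stdPhi x * h

theorem integral_snPdf (l : ℝ) : ∫ x, snPdf l x = 1 := by
  have h : (∫ x, snPdf l x) + ∫ x, snPdf l (-x) = 2 := by
    rw [← integral_add (integrable_snPdf l) (integrable_snPdf l).comp_neg]
    simp_rw [snPdf_add_snPdf_neg]
    rw [integral_const_mul, integral_stdPhi, mul_one]
  rw [integral_neg_eq_self] at h
  linarith

theorem hasDerivAt_snCdf (l x : ℝ) : HasDerivAt (snCdf l) (snPdf l x) x :=
  hasDerivAt_integral_Iic (integrable_snPdf l) (continuous_snPdf l).continuousAt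

theorem tendsto_snCdf_atTop (l : ℝ) : Tendsto (snCdf l) atTop (𝓝 1) := by
  have h := tendsto_integral_Iic_atTop (integrable_snPdf l)
  rwa [integral_snPdf] at h

theorem tendsto_snPdf_atTop (l : ℝ) : Tendsto (snPdf l) atTop (𝓝 0) := by
  have h := tendsto_stdPhi_atTop.const_mul 2
  rw [mul_zero] at h
  exact squeeze_zero (fun t => (snPdf_pos l t).le) (snPdf_le_two_mul_stdPhi l) h

theorem hasDerivAt_snPdf (l x : ℝ) :
    HasDerivAt (snPdf l) (-x * snPdf l x + 2 * l * stdPhi x * stdPhi (l * x)) x := by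
  have h_arg : HasDerivAt (fun y : ℝ => l * y) l x := by
    simpa using (hasDerivAt_id x).const_mul l
  refine (((hasDerivAt_stdPhi x).const_mul 2).mul
    ((hasDerivAt_stdCdf (l * x)).comp x h_arg)).congr_deriv ?_
  simp only [snPdf, Function.comp_apply]
  ring

noncomputable def snMillsBound (l x : ℝ) : ℝ := (x ^ 2 - 1) / ((1 + l ^ 2) * (x ^ 3 + x))

noncomputable def snMillsBoundDeriv (l x : ℝ) : ℝ :=
  (-x ^ 4 + 4 * x ^ 2 + 1) / ((1 + l ^ 2) * (x ^ 3 + x) ^ 2)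

theorem snMillsBound_eq {l x : ℝ} (hl : l ≠ 0) (hx : x ≠ 0) :
    x⁻¹ * (1 + (x ^ 2)⁻¹)⁻¹ * (1 - (l ^ 2 / (1 + l ^ 2)) * (1 + 1 / (l ^ 2 * x ^ 2))) =
      snMillsBound l x := by
  rw [snMillsBound]
  field_simp
  ring

theorem hasDerivAt_snMillsBound (l : ℝ) {x : ℝ} (hx : x ≠ 0) :
    HasDerivAt (snMillsBound l) (snMillsBoundDeriv l x) x := by
  have : x ^ 3 + x ≠ 0 := by
    rw [show x ^ 3 + x = x * (x ^ 2 + 1) by ring]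
    positivity
  have h_den : HasDerivAt (fun x : ℝ => (1 + l ^ 2) * (x ^ 3 + x))
      ((1 + l ^ 2) * (3 * x ^ 2 + 1)) x :=
    (((hasDerivAt_pow 3 x).add (hasDerivAt_id x)).congr_deriv (by norm_num)).const_mul _
  refine (((hasDerivAt_pow 2 x).sub_const 1).div h_den (by positivity)).congr_deriv ?_
  rw [snMillsBoundDeriv, div_eq_div_iff (by positivity) (by positivity)]
  ring

theorem tendsto_snMillsBound_atTop (l : ℝ) : Tendsto (snMillsBound l) atTop (𝓝 0) := by
  refine squeeze_zero' ?_ ?_ tendsto_inv_atTop_zero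
  · filter_upwards [eventually_ge_atTop 1] with t ht
    exact div_nonneg (by nlinarith) (by positivity)
  · filter_upwards [eventually_ge_atTop 1] with t ht
    rw [snMillsBound, div_le_iff₀ (by positivity), inv_mul_eq_div,
      le_div_iff₀ (by linarith)]
    nlinarith [mul_nonneg (sq_nonneg l) (by positivity : (0 : ℝ) ≤ t ^ 3 + t)]

theorem one_add_snMillsBoundDeriv_sub_pos (l : ℝ) {t : ℝ} (ht : t ≠ 0) :
    0 < 1 + snMillsBoundDeriv l t - t * snMillsBound l t := by
  have : t ^ 3 + t ≠ 0 := by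
    rw [show t ^ 3 + t = t * (t ^ 2 + 1) by ring]
    positivity
  have h : 1 + snMillsBoundDeriv l t - t * snMillsBound l t =
      (1 + 6 * t ^ 2 + l ^ 2 * t ^ 2 + t ^ 4 + 2 * l ^ 2 * t ^ 4 + l ^ 2 * t ^ 6) /
        ((1 + l ^ 2) * (t ^ 3 + t) ^ 2) := by
    rw [snMillsBound, snMillsBoundDeriv]
    field_simp
    ring
  rw [h]
  positivity

theorem snMillsBound_mul_lt (l : ℝ) {t : ℝ} (ht : 0 < t) :
    snMillsBound l t * (1 + (l * t) ^ 2) <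
      t * (1 + snMillsBoundDeriv l t - t * snMillsBound l t) := by
  have h : t * (1 + snMillsBoundDeriv l t - t * snMillsBound l t) -
      snMillsBound l t * (1 + (l * t) ^ 2) =
      2 * t * (1 + 3 * t ^ 2 + l ^ 2 * t ^ 2 + l ^ 2 * t ^ 4) / ((1 + l ^ 2) * (t ^ 3 + t) ^ 2) := by
    rw [snMillsBound, snMillsBoundDeriv]
    field_simp
    ring
  have : 0 < 2 * t * (1 + 3 * t ^ 2 + l ^ 2 * t ^ 2 + l ^ 2 * t ^ 4) /
      ((1 + l ^ 2) * (t ^ 3 + t) ^ 2) := by positivity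
  linarith

theorem snPdf_add_deriv_snMillsBound_mul_snPdf_pos {l t : ℝ} (hl : l < 0) (ht : 0 < t) :
    0 < snPdf l t + (snMillsBoundDeriv l t * snPdf l t +
      snMillsBound l t * (-t * snPdf l t + 2 * l * stdPhi t * stdPhi (l * t))) := by
  set A := 1 + snMillsBoundDeriv l t - t * snMillsBound l t with hA
  have h_gordon : -(l * t) * stdPhi (l * t) / (1 + (l * t) ^ 2) < stdCdf (l * t) := by
    simpa [stdPhi_neg] using mul_stdPhi_div_lt_stdCdf_neg (-(l * t))
  have h_tail : 0 < 2 * stdPhi t * A *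
      (stdCdf (l * t) - -(l * t) * stdPhi (l * t) / (1 + (l * t) ^ 2)) := by
    have := stdPhi_pos t
    have := one_add_snMillsBoundDeriv_sub_pos l ht.ne'
    have := sub_pos.2 h_gordon
    positivity
  have h_poly : 0 < 2 * stdPhi t * stdPhi (l * t) * -l *
      (t * A - snMillsBound l t * (1 + (l * t) ^ 2)) / (1 + (l * t) ^ 2) := by
    have := stdPhi_pos t
    have := stdPhi_pos (l * t)
    have := neg_pos.2 hl
    have := sub_pos.2 (snMillsBound_mul_lt l ht)
    positivity
  have h_split : snPdf l t + (snMillsBoundDeriv l t * snPdf l t +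
      snMillsBound l t * (-t * snPdf l t + 2 * l * stdPhi t * stdPhi (l * t))) =
      2 * stdPhi t * A * (stdCdf (l * t) - -(l * t) * stdPhi (l * t) / (1 + (l * t) ^ 2)) +
      2 * stdPhi t * stdPhi (l * t) * -l *
        (t * A - snMillsBound l t * (1 + (l * t) ^ 2)) / (1 + (l * t) ^ 2) := by
    rw [hA, snPdf]
    field_simp
    ring
  linarith

theorem skew_normal_mills_lower_neg (l : ℝ) (hl : l < 0) (x : ℝ) (hx : 0 < x) :
    x⁻¹ * (1 + (x ^ 2)⁻¹)⁻¹ *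
      (1 - (l ^ 2 / (1 + l ^ 2)) * (1 + 1 / (l ^ 2 * x ^ 2)))
      < (1 - snCdf l x) / snPdf l x := by
  rw [snMillsBound_eq hl.ne hx.ne', lt_div_iff₀ (snPdf_pos l x)]
  have h_deriv : ∀ t ∈ Ici x,
      HasDerivAt (fun t => 1 - snCdf l t - snMillsBound l t * snPdf l t)
        (-snPdf l t - (snMillsBoundDeriv l t * snPdf l t +
          snMillsBound l t * (-t * snPdf l t + 2 * l * stdPhi t * stdPhi (l * t)))) t :=
    fun t ht => ((hasDerivAt_snCdf l t).const_sub 1).sub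
      ((hasDerivAt_snMillsBound l (hx.trans_le ht).ne').mul (hasDerivAt_snPdf l t))
  have h_deriv_neg : ∀ t ∈ Ici x, -snPdf l t - (snMillsBoundDeriv l t * snPdf l t +
      snMillsBound l t * (-t * snPdf l t + 2 * l * stdPhi t * stdPhi (l * t))) < 0 :=
    fun t ht => by
      linarith [snPdf_add_deriv_snMillsBound_mul_snPdf_pos hl (hx.trans_le ht)]
  have h_lim : Tendsto (fun t => 1 - snCdf l t - snMillsBound l t * snPdf l t) atTop (𝓝 0) := by
    simpa using ((tendsto_snCdf_atTop l).const_sub 1).sub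
      ((tendsto_snMillsBound_atTop l).mul (tendsto_snPdf_atTop l))
  linarith [lt_of_hasDerivAt_neg_of_tendsto h_deriv h_deriv_neg h_lim]
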